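/- For any vector x in R^d with all coordinates equal in absolute value, the Euclidean norm of x equals sqrt(d/s) times the Euclidean norm of the hard-thresholded vector HT_s(x) that keeps only s of the coordinates. More generally, for any x in R^d and 1 ≤ s ≤ d, ‖x‖ ≤ sqrt(d/s) · ‖HT_s(x)‖, where HT_s(x) retains the s largest-magnitude entries of x and sets the rest to zero. -/

import Mathlib

open Finset
open scoped RealInnerProductSpace

noncomputable def htSet {d : ℕ} (k : ℕ) (x : EuclideanSpace ℝ (Fin d)) : Finset (Fin d) :=
  (Finset.exists_max_image ((Finset.univ : Finset (Fin d)).powersetCard (min k d))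
    (fun S => ∑ i ∈ S, (x i) ^ 2)
    ((Finset.powersetCard_nonempty).2 (by simp))).choose

/-- Hard thresholding: keep the `k` entries of largest magnitude, zero the rest. -/
noncomputable def HT {d : ℕ} (k : ℕ) (x : EuclideanSpace ℝ (Fin d)) : EuclideanSpace ℝ (Fin d) :=
  WithLp.toLp 2 (fun i => if i ∈ htSet k x then x i else 0)

/-- Support of a vector. -/
noncomputable def supp {d : ℕ} (x : EuclideanSpace ℝ (Fin d)) : Finset (Fin d) :=
  Finset.univ.filter (fun i => x i ≠ 0)

/-- Restriction of a vector to an index set. -/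
noncomputable def restr {d : ℕ} (S : Finset (Fin d)) (x : EuclideanSpace ℝ (Fin d)) :
    EuclideanSpace ℝ (Fin d) :=
  WithLp.toLp 2 (fun i => if i ∈ S then x i else 0)

/-- ℓ1 norm. -/
noncomputable def l1norm {d : ℕ} (x : EuclideanSpace ℝ (Fin d)) : ℝ := ∑ i, |x i|

/-- ℓ∞ norm. -/
noncomputable def linf {d : ℕ} (x : EuclideanSpace ℝ (Fin d)) : ℝ := ⨆ i, |x i|

/-!
The set `S` kept by `HT s` maximises `∑ i ∈ T, x i ^ 2` over `s`-subsets `T`, so swapping one kept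
index for a discarded one shows that every discarded square is at most every kept square. Comparing
each of the `s` kept squares with each of the `d - s` discarded ones gives
`s * ∑_{i ∉ S} x i ^ 2 ≤ (d - s) * ∑_{i ∈ S} x i ^ 2`, i.e. `s ‖x‖² ≤ d ‖HT s x‖²`, with equality
when all squares coincide.
-/

section Averaging

variable {ι M : Type*} [Fintype ι] [AddCommMonoid M] [PartialOrder M] [IsOrderedAddMonoid M]

theorem Finset.card_nsmul_sum_le_card_nsmul_sum_of_forall_le (S : Finset ι) (f : ι → M)
    (hS : ∀ i ∈ S, ∀ j ∉ S, f j ≤ f i) :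
    #S • ∑ i, f i ≤ Fintype.card ι • ∑ i ∈ S, f i := by
  classical
  have hcross : #S • ∑ j ∈ Sᶜ, f j ≤ #Sᶜ • ∑ i ∈ S, f i :=
    calc #S • ∑ j ∈ Sᶜ, f j = ∑ _i ∈ S, ∑ j ∈ Sᶜ, f j := by rw [sum_const]
      _ ≤ ∑ i ∈ S, ∑ _j ∈ Sᶜ, f i :=
        sum_le_sum fun i hi => sum_le_sum fun j hj => hS i hi j (mem_compl.mp hj)
      _ = #Sᶜ • ∑ i ∈ S, f i := by simp only [sum_const, smul_sum]
  calc #S • ∑ i, f i = #S • ∑ i ∈ S, f i + #S • ∑ j ∈ Sᶜ, f j := by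
        rw [← sum_add_sum_compl S f, smul_add]
    _ ≤ #S • ∑ i ∈ S, f i + #Sᶜ • ∑ i ∈ S, f i := add_le_add_right hcross _
    _ = Fintype.card ι • ∑ i ∈ S, f i := by rw [← add_smul, card_add_card_compl]

end Averaging

theorem Finset.card_nsmul_sum_eq_card_nsmul_sum_of_forall_eq {ι M : Type*} [Fintype ι]
    [AddCommMonoid M] (S : Finset ι) (f : ι → M) (hf : ∀ i j, f i = f j) :
    #S • ∑ i, f i = Fintype.card ι • ∑ i ∈ S, f i :=
  calc #S • ∑ i, f i = ∑ _i ∈ S, ∑ j, f j := by rw [sum_const]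
    _ = ∑ i ∈ S, ∑ _j : ι, f i := sum_congr rfl fun i _ => sum_congr rfl fun j _ => hf j i
    _ = Fintype.card ι • ∑ i ∈ S, f i := by simp only [sum_const, card_univ, smul_sum]

section HardThresholding

variable {d : ℕ} (k : ℕ) (x : EuclideanSpace ℝ (Fin d))

theorem htSet_spec :
    htSet k x ∈ (univ : Finset (Fin d)).powersetCard (min k d) ∧
      ∀ T ∈ (univ : Finset (Fin d)).powersetCard (min k d),
        ∑ i ∈ T, x i ^ 2 ≤ ∑ i ∈ htSet k x, x i ^ 2 :=
  (exists_max_image _ _ (powersetCard_nonempty.2 (by simp))).choose_spec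

theorem card_htSet : #(htSet k x) = min k d :=
  (mem_powersetCard.mp (htSet_spec k x).1).2

theorem sq_le_sq_of_notMem_htSet {i j : Fin d} (hi : i ∈ htSet k x) (hj : j ∉ htSet k x) :
    x j ^ 2 ≤ x i ^ 2 := by
  set S := htSet k x
  have hj' : j ∉ S.erase i := fun h => hj (mem_of_mem_erase h)
  have hswap : insert j (S.erase i) ∈ (univ : Finset (Fin d)).powersetCard (min k d) := by
    refine mem_powersetCard.mpr ⟨subset_univ _, ?_⟩
    rw [card_insert_of_notMem hj', card_erase_of_mem hi, card_htSet]
    have : 0 < min k d := card_htSet k x ▸ card_pos.mpr ⟨i, hi⟩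
    omega
  have := (htSet_spec k x).2 _ hswap
  rw [sum_insert hj', sum_erase_eq_sub hi] at this
  linarith

theorem norm_HT_sq : ‖HT k x‖ ^ 2 = ∑ i ∈ htSet k x, x i ^ 2 := by
  simp only [EuclideanSpace.norm_sq_eq, HT, Real.norm_eq_abs, sq_abs, ite_pow, ne_eq,
    OfNat.ofNat_ne_zero, not_false_eq_true, zero_pow]
  rw [sum_ite_mem, univ_inter]

end HardThresholding

theorem Real.le_sqrt_div_mul_of_mul_sq_le {a b s t : ℝ} (hs : 0 < s) (hb : 0 ≤ b)
    (h : s * a ^ 2 ≤ t * b ^ 2) : a ≤ √(t / s) * b := by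
  rw [← Real.sqrt_sq hb, ← Real.sqrt_mul' _ (sq_nonneg b)]
  refine le_trans (le_abs_self a) ?_
  rw [← Real.sqrt_sq_eq_abs]
  refine Real.sqrt_le_sqrt ?_
  rw [div_mul_eq_mul_div, le_div_iff₀ hs]
  linarith

theorem Real.eq_sqrt_div_mul_of_mul_sq_eq {a b s t : ℝ} (hs : 0 < s) (ha : 0 ≤ a) (hb : 0 ≤ b)
    (h : s * a ^ 2 = t * b ^ 2) : a = √(t / s) * b := by
  rw [← Real.sqrt_sq hb, ← Real.sqrt_mul' _ (sq_nonneg b), div_mul_eq_mul_div, ← h,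
    mul_div_cancel_left₀ _ hs.ne', Real.sqrt_sq ha]

theorem stmt0 (d s : ℕ) (hs : 1 ≤ s) (hsd : s ≤ d) (x : EuclideanSpace ℝ (Fin d)) :
    ‖x‖ ≤ Real.sqrt ((d : ℝ) / s) * ‖HT s x‖ ∧
      ((∀ i j, |x i| = |x j|) → ‖x‖ = Real.sqrt ((d : ℝ) / s) * ‖HT s x‖) := by
  have hs0 : (0 : ℝ) < s := by exact_mod_cast hs
  have hcard : #(htSet s x) = s := by rw [card_htSet, min_eq_left hsd]
  constructor
  · refine Real.le_sqrt_div_mul_of_mul_sq_le hs0 (norm_nonneg _) ?_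
    rw [EuclideanSpace.real_norm_sq_eq, norm_HT_sq]
    have := (htSet s x).card_nsmul_sum_le_card_nsmul_sum_of_forall_le (fun i => x i ^ 2)
      fun i hi j hj => sq_le_sq_of_notMem_htSet s x hi hj
    simpa [hcard, nsmul_eq_mul] using this
  · intro hall
    refine Real.eq_sqrt_div_mul_of_mul_sq_eq hs0 (norm_nonneg _) (norm_nonneg _) ?_
    rw [EuclideanSpace.real_norm_sq_eq, norm_HT_sq]
    have := (htSet s x).card_nsmul_sum_eq_card_nsmul_sum_of_forall_eq (fun i => x i ^ 2)
      fun i j => by rw [← sq_abs, hall i j, sq_abs]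
    simpa [hcard, nsmul_eq_mul] using this
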